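/- arXiv:2505.18108 — 5 statements merged into one kernel-verified Lean document; each statement's English description precedes it below -/
import Mathlib

section
/- For every integer 𝒩 ≥ 2, the kernel of the ring homomorphism ℤ[x^{±1},d^{±1}] → ∏_{N=2}^{𝒩} ℤ[d^{±1}] whose N-th component is ψ_N equals the principal ideal generated by ∏_{N=2}^{𝒩}(x·d^{N−1} − 1); consequently the 𝒩-th non-weighted unified Jones quotient ring L̂^{J,k}_𝒩 = ℤ[x^{±1},d^{±1}]/⟨∏_{N=2}^{𝒩}(x·d^{N−1} − 1)⟩ embeds into ∏_{N=2}^{𝒩} ℤ[d^{±1}]. -/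
open LaurentPolynomial

set_option synthInstance.maxHeartbeats 1000000
set_option maxHeartbeats 1000000

theorem aux_dvd_of_apply_eq_zero {R : Type*} [CommRing R]
    (φ : LaurentPolynomial R →ₐ[R] R)
    {p : LaurentPolynomial R} (hp : φ p = 0) :
    (T 1 - C (φ (T 1))) ∣ p := by
  obtain ⟨n, p', hp'⟩ := p.exists_T_pow
  have key : ∀ q : Polynomial R, φ (q.toLaurent) = Polynomial.eval (φ (T 1)) q := by
    intro q
    have : φ.comp Polynomial.toLaurentAlg = Polynomial.aeval (φ (T 1)) := by
      apply Polynomial.algHom_ext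
      simp [Polynomial.toLaurentAlg_apply, Polynomial.toLaurent_X]
    have := DFunLike.congr_fun this q
    simpa [Polynomial.toLaurentAlg_apply, Polynomial.coe_aeval_eq_eval] using this
  have hroot : Polynomial.eval (φ (T 1)) p' = 0 := by
    rw [← key, hp', map_mul, hp, zero_mul]
  obtain ⟨q, hq⟩ := Polynomial.dvd_iff_isRoot.mpr hroot
  refine ⟨q.toLaurent * T (-n), ?_⟩
  have h2 : p * T n = (T 1 - C (φ (T 1))) * q.toLaurent := by
    rw [← hp', hq]
    simp [Polynomial.toLaurent_X, Polynomial.toLaurent_C, sub_mul]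
  calc p = p * T n * T (-n) := by rw [mul_T_assoc]; simp
    _ = (T 1 - C (φ (T 1))) * (q.toLaurent * T (-n)) := by rw [h2, mul_assoc]

lemma aux_T_ne_one {k : ℤ} (hk : k ≠ 0) : (T k : LaurentPolynomial ℤ) ≠ 1 := by
  intro h
  rw [← T_zero] at h
  have := congrArg (fun f : LaurentPolynomial ℤ => f.coeff k) h
  simp only [T_apply] at this
  simp [hk, Ne.symm hk] at this

lemma aux_psi_C (ψ : LaurentPolynomial (LaurentPolynomial ℤ) →ₐ[LaurentPolynomial ℤ]
      LaurentPolynomial ℤ) (r : LaurentPolynomial ℤ) : ψ (C r) = r := by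
  rw [C_eq_algebraMap, AlgHom.commutes]
  simp

lemma aux_psi_g (ψ : LaurentPolynomial (LaurentPolynomial ℤ) →ₐ[LaurentPolynomial ℤ]
      LaurentPolynomial ℤ) (N M : ℤ) (hψ : ψ (T 1) = T (1 - N)) :
    ψ ((T 1 : LaurentPolynomial (LaurentPolynomial ℤ)) * C (T (M - 1)) - 1)
      = T (M - N) - 1 := by
  rw [map_sub, map_one, map_mul, hψ, aux_psi_C, ← T_add]
  norm_num

lemma aux_key (ψ : LaurentPolynomial (LaurentPolynomial ℤ) →ₐ[LaurentPolynomial ℤ]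
      LaurentPolynomial ℤ) (N : ℤ) (hψ : ψ (T 1) = T (1 - N))
    (p : LaurentPolynomial (LaurentPolynomial ℤ)) :
    ψ p = 0 ↔ ((T 1 : LaurentPolynomial (LaurentPolynomial ℤ)) * C (T (N - 1)) - 1) ∣ p := by
  have hC : (C (T (N - 1)) : LaurentPolynomial (LaurentPolynomial ℤ)) * C (T (1 - N)) = 1 := by
    rw [← map_mul, ← T_add, show (N - 1) + (1 - N) = 0 by ring, T_zero, map_one]
  have hg : ((T 1 : LaurentPolynomial (LaurentPolynomial ℤ)) * C (T (N - 1)) - 1)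
      = C (T (N - 1)) * (T 1 - C (T (1 - N))) := by
    rw [mul_sub, ← T_mul, hC]
  constructor
  · intro hp
    obtain ⟨r, hr⟩ := aux_dvd_of_apply_eq_zero ψ hp
    rw [hψ] at hr
    refine ⟨C (T (1 - N)) * r, ?_⟩
    rw [hg, mul_mul_mul_comm, hC, one_mul, ← hr]
  · rintro ⟨r, rfl⟩
    rw [map_mul]
    have := aux_psi_g ψ N N hψ
    rw [this]
    simp


/-- For every integer `𝒩 ≥ 2`, the kernel of the ring homomorphism
`ℤ[x^{±1},d^{±1}] → ∏_{N=2}^{𝒩} ℤ[d^{±1}]` whose `N`-th component is the specialisation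
`ψ_N` (the unique `ℤ[d^{±1}]`-algebra homomorphism with `ψ_N(x) = d^(1−N)`) equals the
principal ideal generated by `∏_{N=2}^{𝒩}(x·d^(N−1) − 1)`; consequently the 𝒩-th
non-weighted unified Jones quotient ring
`ℤ[x^{±1},d^{±1}]/⟨∏_{N=2}^{𝒩}(x·d^(N−1) − 1)⟩` embeds into `∏_{N=2}^{𝒩} ℤ[d^{±1}]`. -/
theorem kernel_product_specialisation_and_embedding (𝒩 : ℤ) (h𝒩 : 2 ≤ 𝒩)
    (ψ : ℤ → (LaurentPolynomial (LaurentPolynomial ℤ) →ₐ[LaurentPolynomial ℤ]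
      LaurentPolynomial ℤ))
    (hψ : ∀ N, ψ N (T 1) = T (1 - N)) :
    RingHom.ker (Pi.ringHom fun N : Finset.Icc (2 : ℤ) 𝒩 => ((ψ (N : ℤ)).toRingHom)) =
      Ideal.span {∏ N ∈ Finset.Icc (2 : ℤ) 𝒩,
        ((T 1 : LaurentPolynomial (LaurentPolynomial ℤ)) * C (T (N - 1)) - 1)} ∧
    ∃ f : (LaurentPolynomial (LaurentPolynomial ℤ) ⧸
        Ideal.span {∏ N ∈ Finset.Icc (2 : ℤ) 𝒩,
          ((T 1 : LaurentPolynomial (LaurentPolynomial ℤ)) * C (T (N - 1)) - 1)})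
        →+* (Finset.Icc (2 : ℤ) 𝒩 → LaurentPolynomial ℤ),
      Function.Injective f ∧
      ∀ p, f (Ideal.Quotient.mk (Ideal.span {∏ N ∈ Finset.Icc (2 : ℤ) 𝒩,
          ((T 1 : LaurentPolynomial (LaurentPolynomial ℤ)) * C (T (N - 1)) - 1)}) p)
        = fun N : Finset.Icc (2 : ℤ) 𝒩 => ψ (N : ℤ) p := by
  classical
  set g : ℤ → LaurentPolynomial (LaurentPolynomial ℤ) :=
    fun N => (T 1 : LaurentPolynomial (LaurentPolynomial ℤ)) * C (T (N - 1)) - 1 with hgdef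
  have claim : ∀ s : Finset ℤ, ∀ p : LaurentPolynomial (LaurentPolynomial ℤ),
      (∀ N ∈ s, ψ N p = 0) → (∏ N ∈ s, g N) ∣ p := by
    intro s
    induction s using Finset.induction_on with
    | empty => intro p _; simp
    | @insert M s hM ih =>
      intro p hp
      obtain ⟨q, rfl⟩ := (aux_key (ψ M) M (hψ M) p).mp (hp M (Finset.mem_insert_self M s))
      have hq : ∀ N ∈ s, ψ N q = 0 := by
        intro N hN
        have h0 := hp N (Finset.mem_insert_of_mem hN)
        rw [map_mul, aux_psi_g (ψ N) N M (hψ N)] at h0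
        have hne : (T (M - N) - 1 : LaurentPolynomial ℤ) ≠ 0 := by
          rw [sub_ne_zero]
          exact aux_T_ne_one (sub_ne_zero.mpr (fun h => hM (h ▸ hN)))
        exact (mul_eq_zero.mp h0).resolve_left hne
      rw [Finset.prod_insert hM]
      exact mul_dvd_mul_left (g M) (ih q hq)
  have hker : RingHom.ker (Pi.ringHom fun N : Finset.Icc (2 : ℤ) 𝒩 => ((ψ (N : ℤ)).toRingHom)) =
      Ideal.span {∏ N ∈ Finset.Icc (2 : ℤ) 𝒩, g N} := by
    ext p
    rw [RingHom.mem_ker, Ideal.mem_span_singleton]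
    constructor
    · intro h
      refine claim _ p fun N hN => ?_
      exact congrFun h ⟨N, hN⟩
    · intro h
      funext N
      exact (aux_key (ψ (N : ℤ)) (N : ℤ) (hψ (N : ℤ)) p).mpr
        (dvd_trans (Finset.dvd_prod_of_mem g N.2) h)
  set Φ : LaurentPolynomial (LaurentPolynomial ℤ) →+* (Finset.Icc (2 : ℤ) 𝒩 → LaurentPolynomial ℤ) :=
    Pi.ringHom fun N : Finset.Icc (2 : ℤ) 𝒩 => ((ψ (N : ℤ)).toRingHom) with hΦ
  have hmem : ∀ a ∈ Ideal.span {∏ N ∈ Finset.Icc (2 : ℤ) 𝒩, g N}, Φ a = 0 := by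
    intro a ha
    rw [← hker] at ha
    exact ha
  refine ⟨hker, Ideal.Quotient.lift _ Φ hmem, ?_, fun p => ?_⟩
  · rw [injective_iff_map_eq_zero]
    intro a ha
    obtain ⟨p, rfl⟩ := Ideal.Quotient.mk_surjective a
    rw [Ideal.Quotient.lift_mk] at ha
    exact Ideal.Quotient.eq_zero_iff_mem.mpr (hker ▸ (RingHom.mem_ker.mpr ha))
  · rw [Ideal.Quotient.lift_mk]; rfl
end

section
/- For every integer N with 2 ≤ N ≤ 𝒩, the kernel of the weighted specialisation φ_N : S → ℤ[d^{±1}] equals the ideal of S generated by x·d^{N−1} − 1, by w_j − 1 for 1 ≤ j ≤ N−1, and by w_j for N ≤ j ≤ 𝒩−1. -/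
open LaurentPolynomial

set_option synthInstance.maxHeartbeats 1000000
set_option maxHeartbeats 1000000

/-- `S = ℤ[x^{±1},d^{±1}][w_1,…,w_{𝒩−1}]`, modelled as the multivariate polynomial ring in
`𝒩−1` variables (the variable `j : Fin (𝒩−1)` is `w_{j+1}`) over the Laurent polynomial
ring in `x` (the outer `T`) over `ℤ[d^{±1}]`. -/
abbrev WRing (𝒩 : ℕ) : Type :=
  MvPolynomial (Fin (𝒩 - 1)) (LaurentPolynomial (LaurentPolynomial ℤ))

/-- Two ring homomorphisms out of a Laurent polynomial ring agree if they agree on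
constants and on `T 1`. -/
theorem laurent_ringHom_ext {R A : Type*} [CommSemiring R] [Semiring A]
    {f g : LaurentPolynomial R →+* A}
    (hC : ∀ r : R, f (C r) = g (C r)) (hT : f (T 1) = g (T 1)) : f = g := by
  have hTn : ∀ n : ℤ, f (T n) = g (T n) := by
    intro n
    induction n using Int.induction_on with
    | zero => simp
    | succ k ih => rw [T_add, map_mul, map_mul, ih, hT]
    | pred k ih =>
        have hu : IsUnit (g (T 1)) := (isUnit_T (R := R) 1).map g
        refine hu.mul_right_cancel ?_
        calc f (T (-(k : ℤ) - 1)) * g (T 1)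
            = f (T (-(k : ℤ) - 1)) * f (T 1) := by rw [hT]
          _ = f (T (-(k : ℤ) - 1 + 1)) := by rw [← map_mul, ← T_add]
          _ = g (T (-(k : ℤ) - 1 + 1)) := by
              have e : -(k : ℤ) - 1 + 1 = -(k : ℤ) := by ring
              rw [e, ih]
          _ = g (T (-(k : ℤ) - 1)) * g (T 1) := by rw [← map_mul, ← T_add]
  refine AddMonoidAlgebra.ringHom_ext (fun b => ?_) (fun a => ?_)
  · exact hC b
  · exact hTn a

/-- A ring endomorphism of `ℤ[d^{±1}]` fixing `T 1` is the identity. -/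
theorem laurent_int_endo_eq_id (e : LaurentPolynomial ℤ →+* LaurentPolynomial ℤ)
    (h : e (T 1) = T 1) : e = RingHom.id _ := by
  refine laurent_ringHom_ext (fun r => ?_) (by simpa using h)
  have : e.comp (C : ℤ →+* LaurentPolynomial ℤ) = (C : ℤ →+* LaurentPolynomial ℤ) :=
    Subsingleton.elim _ _
  simpa using RingHom.congr_fun this r

/-- For every integer `N` with `2 ≤ N ≤ 𝒩`, the kernel of the weighted
specialisation `φ_N : S → ℤ[d^{±1}]` (the unique ring homomorphism with `φ_N(x) = d^(1−N)`,
`φ_N(d) = d`, `φ_N(w_j) = 1` for `1 ≤ j ≤ N−1` and `φ_N(w_j) = 0` for `N ≤ j ≤ 𝒩−1`)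
equals the ideal of `S` generated by `x·d^(N−1) − 1`, by `w_j − 1` for `1 ≤ j ≤ N−1`,
and by `w_j` for `N ≤ j ≤ 𝒩−1`. -/
theorem kernel_weighted_specialisation (𝒩 N : ℕ) (hN2 : 2 ≤ N) (hN𝒩 : N ≤ 𝒩)
    (φ : WRing 𝒩 →+* LaurentPolynomial ℤ)
    (hx : φ (MvPolynomial.C (T 1)) = T (1 - (N : ℤ)))
    (hd : φ (MvPolynomial.C (C (T 1))) = T 1)
    (hw : ∀ j : Fin (𝒩 - 1), φ (MvPolynomial.X j) = if (j : ℕ) + 1 ≤ N - 1 then 1 else 0) :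
    RingHom.ker φ =
      Ideal.span
        ({MvPolynomial.C ((T 1) * C (T ((N : ℤ) - 1)) - 1)} ∪
          Set.range (fun j : Fin (𝒩 - 1) =>
            if (j : ℕ) + 1 ≤ N - 1 then MvPolynomial.X j - 1 else MvPolynomial.X j)) := by
  set ι : LaurentPolynomial ℤ →+* WRing 𝒩 :=
    (MvPolynomial.C :
        LaurentPolynomial (LaurentPolynomial ℤ) →+* WRing 𝒩).comp
      (C : LaurentPolynomial ℤ →+* LaurentPolynomial (LaurentPolynomial ℤ)) with hι
  set I : Ideal (WRing 𝒩) :=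
    Ideal.span
      ({MvPolynomial.C ((T 1) * C (T ((N : ℤ) - 1)) - 1)} ∪
        Set.range (fun j : Fin (𝒩 - 1) =>
          if (j : ℕ) + 1 ≤ N - 1 then MvPolynomial.X j - 1 else MvPolynomial.X j)) with hI
  -- φ ∘ ι is the identity on ℤ[d^{±1}]
  have hid : ∀ s : LaurentPolynomial ℤ, φ (ι s) = s := by
    intro s
    have := laurent_int_endo_eq_id (φ.comp ι) (by simpa [hι] using hd)
    simpa using RingHom.congr_fun this s
  have hgen1 : (MvPolynomial.C ((T 1) * C (T ((N : ℤ) - 1)) - 1) : WRing 𝒩) ∈ I :=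
    Ideal.subset_span (Or.inl rfl)
  have hgenj : ∀ j : Fin (𝒩 - 1),
      (if (j : ℕ) + 1 ≤ N - 1 then MvPolynomial.X j - 1 else MvPolynomial.X j : WRing 𝒩) ∈ I :=
    fun j => Ideal.subset_span (Or.inr ⟨j, rfl⟩)
  -- key algebraic identity
  have key : (MvPolynomial.C ((T 1) * C (T ((N : ℤ) - 1)) - 1) : WRing 𝒩) *
      ι (T (1 - (N : ℤ))) =
      MvPolynomial.C (T 1) - ι (T (1 - (N : ℤ))) := by
    have inner : ((T 1 : LaurentPolynomial (LaurentPolynomial ℤ)) * C (T ((N : ℤ) - 1)) - 1) *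
        C (T (1 - (N : ℤ))) = T 1 - C (T (1 - (N : ℤ))) := by
      rw [sub_mul, one_mul, mul_assoc, ← map_mul, ← T_add]
      have h0 : ((N : ℤ) - 1 + (1 - (N : ℤ))) = 0 := by ring
      rw [h0, T_zero, map_one, mul_one]
    calc (MvPolynomial.C ((T 1) * C (T ((N : ℤ) - 1)) - 1) : WRing 𝒩) * ι (T (1 - (N : ℤ)))
        = MvPolynomial.C (((T 1) * C (T ((N : ℤ) - 1)) - 1) * C (T (1 - (N : ℤ)))) :=
          (map_mul (MvPolynomial.C :
            LaurentPolynomial (LaurentPolynomial ℤ) →+* WRing 𝒩) _ _).symm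
      _ = MvPolynomial.C ((T 1 : LaurentPolynomial (LaurentPolynomial ℤ)) -
            C (T (1 - (N : ℤ)))) := by rw [inner]
      _ = MvPolynomial.C (T 1) - ι (T (1 - (N : ℤ))) :=
          map_sub (MvPolynomial.C :
            LaurentPolynomial (LaurentPolynomial ℤ) →+* WRing 𝒩) _ _
  have hsub : (MvPolynomial.C (T 1) : WRing 𝒩) - ι (T (1 - (N : ℤ))) ∈ I := by
    rw [← key]; exact I.mul_mem_right _ hgen1
  apply le_antisymm
  · -- ker φ ≤ I : show `p - ι (φ p) ∈ I` for all `p`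
    have haddK : ∀ p q : WRing 𝒩, p - ι (φ p) ∈ I → q - ι (φ q) ∈ I →
        (p + q) - ι (φ (p + q)) ∈ I := by
      intro p q hp hq
      have e : (p + q) - ι (φ (p + q)) = (p - ι (φ p)) + (q - ι (φ q)) := by
        rw [map_add, map_add]; ring
      rw [e]; exact I.add_mem hp hq
    have hmulK : ∀ p q : WRing 𝒩, p - ι (φ p) ∈ I → q - ι (φ q) ∈ I →
        (p * q) - ι (φ (p * q)) ∈ I := by
      intro p q hp hq
      have e : (p * q) - ι (φ (p * q)) = p * (q - ι (φ q)) + (p - ι (φ p)) * ι (φ q) := by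
        rw [map_mul, map_mul]; ring
      rw [e]; exact I.add_mem (I.mul_mem_left _ hq) (I.mul_mem_right _ hp)
    have hCpos : (MvPolynomial.C (T 1 : LaurentPolynomial (LaurentPolynomial ℤ)) : WRing 𝒩) -
        ι (φ (MvPolynomial.C (T 1))) ∈ I := by rw [hx]; exact hsub
    -- the value of `φ` on `C (T (-1))`
    have hφneg : φ (MvPolynomial.C (T (-1) : LaurentPolynomial (LaurentPolynomial ℤ))) =
        T ((N : ℤ) - 1) := by
      have h1 : φ (MvPolynomial.C (T (-1) : LaurentPolynomial (LaurentPolynomial ℤ))) *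
          φ (MvPolynomial.C (T 1 : LaurentPolynomial (LaurentPolynomial ℤ))) = 1 := by
        rw [← map_mul, ← map_mul, ← T_add]
        norm_num
      have h2 : (T (1 - (N : ℤ)) : LaurentPolynomial ℤ) * T ((N : ℤ) - 1) = 1 := by
        rw [← T_add]
        have h0 : ((1 : ℤ) - (N : ℤ) + ((N : ℤ) - 1)) = 0 := by ring
        rw [h0, T_zero]
      calc φ (MvPolynomial.C (T (-1) : LaurentPolynomial (LaurentPolynomial ℤ)))
          = φ (MvPolynomial.C (T (-1) : LaurentPolynomial (LaurentPolynomial ℤ))) *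
            (T (1 - (N : ℤ)) * T ((N : ℤ) - 1)) := by rw [h2, mul_one]
        _ = (φ (MvPolynomial.C (T (-1) : LaurentPolynomial (LaurentPolynomial ℤ))) *
            φ (MvPolynomial.C (T 1 : LaurentPolynomial (LaurentPolynomial ℤ)))) *
            T ((N : ℤ) - 1) := by rw [hx, mul_assoc]
        _ = T ((N : ℤ) - 1) := by rw [h1, one_mul]
    have hCneg : (MvPolynomial.C (T (-1) : LaurentPolynomial (LaurentPolynomial ℤ)) : WRing 𝒩) -
        ι (φ (MvPolynomial.C (T (-1)))) ∈ I := by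
      rw [hφneg]
      have u1 : (MvPolynomial.C (T 1 : LaurentPolynomial (LaurentPolynomial ℤ)) : WRing 𝒩) *
          MvPolynomial.C (T (-1)) = 1 := by
        rw [← map_mul, ← T_add]
        norm_num
      have u2 : ι (T (1 - (N : ℤ))) * ι (T ((N : ℤ) - 1)) = 1 := by
        rw [← map_mul, ← T_add]
        have h0 : ((1 : ℤ) - (N : ℤ) + ((N : ℤ) - 1)) = 0 := by ring
        rw [h0, T_zero, map_one]
      have e2 : ((MvPolynomial.C (T 1) : WRing 𝒩) - ι (T (1 - (N : ℤ)))) *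
          (MvPolynomial.C (T (-1)) * ι (T ((N : ℤ) - 1))) =
          ι (T ((N : ℤ) - 1)) - MvPolynomial.C (T (-1)) := by
        calc ((MvPolynomial.C (T 1) : WRing 𝒩) - ι (T (1 - (N : ℤ)))) *
            (MvPolynomial.C (T (-1)) * ι (T ((N : ℤ) - 1))) =
            (MvPolynomial.C (T 1) * MvPolynomial.C (T (-1))) * ι (T ((N : ℤ) - 1)) -
              (ι (T (1 - (N : ℤ))) * ι (T ((N : ℤ) - 1))) * MvPolynomial.C (T (-1)) := by ring
          _ = ι (T ((N : ℤ) - 1)) - MvPolynomial.C (T (-1)) := by rw [u1, u2, one_mul, one_mul]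
      have hmem := I.mul_mem_right (MvPolynomial.C (T (-1)) * ι (T ((N : ℤ) - 1))) hsub
      rw [e2] at hmem
      have hmem2 := I.mul_mem_left (-1) hmem
      have e3 : (-1 : WRing 𝒩) * (ι (T ((N : ℤ) - 1)) - MvPolynomial.C (T (-1))) =
          MvPolynomial.C (T (-1)) - ι (T ((N : ℤ) - 1)) := by ring
      rwa [e3] at hmem2
    have hone : (1 : WRing 𝒩) - ι (φ 1) ∈ I := by
      rw [map_one, map_one, sub_self]; exact I.zero_mem
    have hTn : ∀ n : ℤ, (MvPolynomial.C (T n : LaurentPolynomial (LaurentPolynomial ℤ)) : WRing 𝒩) -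
        ι (φ (MvPolynomial.C (T n))) ∈ I := by
      intro n
      induction n using Int.induction_on with
      | zero => simpa [T_zero] using hone
      | succ k ih =>
          have e : (T ((k : ℤ) + 1) : LaurentPolynomial (LaurentPolynomial ℤ)) = T k * T 1 := T_add _ _
          rw [e, map_mul]
          exact hmulK _ _ ih hCpos
      | pred k ih =>
          have e : (T (-(k : ℤ) - 1) : LaurentPolynomial (LaurentPolynomial ℤ)) = T (-k) * T (-1) := by
            rw [show (-(k : ℤ) - 1) = (-(k : ℤ)) + (-1) by ring, T_add]
          rw [e, map_mul]
          exact hmulK _ _ ih hCneg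
    have hconst : ∀ a : LaurentPolynomial (LaurentPolynomial ℤ),
        (MvPolynomial.C a : WRing 𝒩) - ι (φ (MvPolynomial.C a)) ∈ I := by
      intro a
      induction a using AddMonoidAlgebra.induction_linear with
      | zero => simpa using I.zero_mem
      | add p q hp hq =>
          have := haddK _ _ hp hq
          rwa [← map_add] at this
      | single n r =>
          have hsingle : (MvPolynomial.C
              (AddMonoidAlgebra.single n r : LaurentPolynomial (LaurentPolynomial ℤ)) : WRing 𝒩) -
              ι (φ (MvPolynomial.C (AddMonoidAlgebra.single n r))) ∈ I := by
            have e : (AddMonoidAlgebra.single n r : LaurentPolynomial (LaurentPolynomial ℤ)) =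
                C r * T n := single_eq_C_mul_T r n
            rw [e, map_mul]
            refine hmulK _ _ ?_ (hTn n)
            have e2 : (MvPolynomial.C (C r) : WRing 𝒩) = ι r := rfl
            rw [e2, hid r, sub_self]
            exact I.zero_mem
          exact hsingle
    have hXk : ∀ i : Fin (𝒩 - 1),
        (MvPolynomial.X i : WRing 𝒩) - ι (φ (MvPolynomial.X i)) ∈ I := by
      intro i
      rw [hw i]
      by_cases h : (i : ℕ) + 1 ≤ N - 1
      · rw [if_pos h, map_one]
        have := hgenj i; rwa [if_pos h] at this
      · have hg := hgenj i
        rw [if_neg h] at hg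
        have e : (MvPolynomial.X i : WRing 𝒩) - ι (if (i : ℕ) + 1 ≤ N - 1 then 1 else 0) =
            MvPolynomial.X i := by
          rw [if_neg h, map_zero]; ring
        rw [e]; exact hg
    have hall : ∀ p : WRing 𝒩, p - ι (φ p) ∈ I := by
      intro p
      induction p using MvPolynomial.induction_on with
      | C a => exact hconst a
      | add p q hp hq => exact haddK p q hp hq
      | mul_X p i hp => exact hmulK _ _ hp (hXk i)
    intro p hp
    have hp0 : φ p = 0 := hp
    have hmem := hall p
    have e : p - ι (φ p) = p := by rw [hp0, map_zero]; ring
    rwa [e] at hmem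
  · -- I ≤ ker φ
    rw [hI, Ideal.span_le]
    rintro x (rfl | ⟨j, rfl⟩)
    · simp only [SetLike.mem_coe, RingHom.mem_ker]
      have hid' : φ (MvPolynomial.C (C (T ((N : ℤ) - 1)))) = T ((N : ℤ) - 1) :=
        hid (T ((N : ℤ) - 1))
      rw [map_sub, map_sub, map_one, map_one, map_mul, map_mul, hx, hid', ← T_add]
      have h0 : ((1 : ℤ) - (N : ℤ) + ((N : ℤ) - 1)) = 0 := by ring
      rw [h0, T_zero, sub_self]
    · simp only [SetLike.mem_coe, RingHom.mem_ker]
      by_cases h : (j : ℕ) + 1 ≤ N - 1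
      · rw [if_pos h, map_sub, map_one, hw j, if_pos h, sub_self]
      · rw [if_neg h, hw j, if_neg h]
end

section
/- For every integer 𝒩 ≥ 3, neither of the two ideals I₁ and I₂ of S is contained in the other: I₁ ⊄ I₂ and I₂ ⊄ I₁. (Hence the 𝒩-th weighted unified Jones invariant and the 𝒩-th non-weighted unified Jones invariant live in genuinely different quotient rings of S.) -/
open LaurentPolynomial

set_option synthInstance.maxHeartbeats 1000000
set_option maxHeartbeats 1000000
set_option maxSynthPendingDepth 10

/-- The ideal `I₂` of `S`, generated by `∏_{N=2}^{𝒩}(x·d^(N−1) − 1)` together with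
`w_j − 1` for `1 ≤ j ≤ 𝒩−1` (defining the 𝒩-th non-weighted unified Jones invariant). -/
noncomputable def I₂ (𝒩 : ℕ) : Ideal (WRing 𝒩) :=
  Ideal.span
    ({MvPolynomial.C (∏ N ∈ Finset.Icc 2 𝒩, ((T 1) * C (T ((N : ℤ) - 1)) - 1))} ∪
      Set.range (fun j : Fin (𝒩 - 1) => MvPolynomial.X j - 1))

noncomputable def gmul : Multiplicative ℤ →* LaurentPolynomial ℤ where
  toFun n := T (-(Multiplicative.toAdd n))
  map_one' := by
    show T (-(Multiplicative.toAdd (1 : Multiplicative ℤ))) = 1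
    rw [toAdd_one, neg_zero, T_zero]
  map_mul' a b := by
    show T (-(Multiplicative.toAdd (a * b))) = _
    rw [toAdd_mul, neg_add, T_add]

noncomputable def ψ0 : LaurentPolynomial (LaurentPolynomial ℤ) →+* LaurentPolynomial ℤ :=
  AddMonoidAlgebra.liftNCRingHom (RingHom.id _) gmul (fun _ _ => Commute.all _ _)

lemma ψ0_single (n : ℤ) (b : LaurentPolynomial ℤ) :
    ψ0 (AddMonoidAlgebra.single n b) = b * T (-n) := by
  show AddMonoidAlgebra.liftNC _ _ (AddMonoidAlgebra.single n b) = _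
  rw [AddMonoidAlgebra.liftNC_single]
  rfl

lemma ψ0_T (n : ℤ) : ψ0 (T n) = T (-n) := by
  rw [T, ψ0_single, one_mul]

lemma ψ0_C (p : LaurentPolynomial ℤ) : ψ0 (C p) = p := by
  show ψ0 (AddMonoidAlgebra.single 0 p) = p
  rw [ψ0_single, neg_zero, T_zero, mul_one]

lemma T_ne_one {n : ℤ} (hn : n ≠ 0) : (T n : LaurentPolynomial ℤ) ≠ 1 := by
  rw [← T_zero]
  intro h
  have := (AddMonoidAlgebra.single_inj).mp h
  simp at this
  omega

lemma hc_aux (𝒩 N : ℕ) (h : 1 ≤ N) :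
    (MvPolynomial.C (T 1 * C (T ((N : ℤ) - 1)) - 1) : WRing 𝒩)
      = MvPolynomial.C (T 1) * (MvPolynomial.C (C (T 1)) : WRing 𝒩) ^ (N - 1) - 1 := by
  have h1 : ((N - 1 : ℕ) : ℤ) = (N : ℤ) - 1 := by omega
  have hT : (T ((N : ℤ) - 1) : LaurentPolynomial ℤ) = T 1 ^ (N - 1) := by
    rw [T_pow, mul_one, h1]
  rw [map_sub, map_mul, map_one, hT, map_pow, map_pow]

noncomputable def ψ (𝒩 : ℕ) : WRing 𝒩 →+* LaurentPolynomial ℤ :=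
  MvPolynomial.eval₂Hom ψ0 (fun _ => 1)

lemma ψ_C (𝒩 : ℕ) (p : LaurentPolynomial (LaurentPolynomial ℤ)) :
    ψ 𝒩 (MvPolynomial.C p) = ψ0 p := by
  simp [ψ]

lemma ψ_X (𝒩 : ℕ) (i : Fin (𝒩 - 1)) : ψ 𝒩 (MvPolynomial.X i) = 1 := by
  simp [ψ]

lemma I₂_le_ker (𝒩 : ℕ) (h : 2 ≤ 𝒩) : I₂ 𝒩 ≤ RingHom.ker (ψ 𝒩) := by
  rw [I₂, Ideal.span_le]
  rintro p (hp | ⟨i, rfl⟩)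
  · rw [Set.mem_singleton_iff] at hp
    subst hp
    rw [SetLike.mem_coe, RingHom.mem_ker, ψ_C, map_prod]
    apply Finset.prod_eq_zero (Finset.mem_Icc.mpr ⟨le_refl 2, h⟩)
    rw [map_sub, map_mul, map_one, ψ0_T, ψ0_C,
      show ((2 : ℕ) : ℤ) - 1 = 1 from by norm_num, ← T_add,
      show (-1 + 1 : ℤ) = 0 from by norm_num, T_zero, sub_self]
  · rw [SetLike.mem_coe, RingHom.mem_ker, map_sub, map_one, ψ_X, sub_self]

/-- For every integer `𝒩 ≥ 3`, neither of the ideals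
`I₁ = ⋂_{N=2}^{𝒩} ker φ_N` (defining the 𝒩-th weighted unified Jones invariant) and `I₂`
is contained in the other.  Here `φ_N : S → ℤ[d^{±1}]` is the unique ring homomorphism with
`φ_N(x) = d^(1−N)`, `φ_N(d) = d`, `φ_N(w_j) = 1` for `j ≤ N−1` and `φ_N(w_j) = 0` for
`j ≥ N`. -/
theorem weighted_vs_nonweighted_ideals_incomparable (𝒩 : ℕ) (h𝒩 : 3 ≤ 𝒩)
    (φ : ℕ → (WRing 𝒩 →+* LaurentPolynomial ℤ))
    (hx : ∀ N ∈ Finset.Icc 2 𝒩, φ N (MvPolynomial.C (T 1)) = T (1 - (N : ℤ)))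
    (hd : ∀ N ∈ Finset.Icc 2 𝒩, φ N (MvPolynomial.C (C (T 1))) = T 1)
    (hw : ∀ N ∈ Finset.Icc 2 𝒩, ∀ j : Fin (𝒩 - 1),
      φ N (MvPolynomial.X j) = if (j : ℕ) + 1 ≤ N - 1 then 1 else 0) :
    ¬ (⨅ N ∈ Finset.Icc 2 𝒩, RingHom.ker (φ N)) ≤ I₂ 𝒩 ∧
    ¬ I₂ 𝒩 ≤ (⨅ N ∈ Finset.Icc 2 𝒩, RingHom.ker (φ N)) := by
  have hj : 𝒩 - 2 < 𝒩 - 1 := by omega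
  set j : Fin (𝒩 - 1) := ⟨𝒩 - 2, hj⟩ with hjdef
  have h2 : (2 : ℕ) ∈ Finset.Icc 2 𝒩 := Finset.mem_Icc.mpr ⟨le_refl 2, by omega⟩
  have hNmem : 𝒩 ∈ Finset.Icc 2 𝒩 := Finset.mem_Icc.mpr ⟨by omega, le_refl 𝒩⟩
  constructor
  · intro hle
    set e : WRing 𝒩 :=
      MvPolynomial.X j * MvPolynomial.C (T 1 * C (T ((𝒩 : ℤ) - 1)) - 1) with he
    have hmem : e ∈ ⨅ N ∈ Finset.Icc 2 𝒩, RingHom.ker (φ N) := by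
      simp only [Submodule.mem_iInf]
      intro N hN
      rw [RingHom.mem_ker, he, map_mul]
      rcases eq_or_ne N 𝒩 with hEq | hne
      · subst hEq
        have hcast : ((N - 1 : ℕ) : ℤ) = (N : ℤ) - 1 := by omega
        rw [hc_aux N N (by omega), map_sub, map_mul, map_pow, map_one, hx N hN, hd N hN,
          T_pow, mul_one, hcast, ← T_add,
          show (1 - (N : ℤ)) + ((N : ℤ) - 1) = 0 from by ring, T_zero, sub_self, mul_zero]
      · have hNIcc := Finset.mem_Icc.mp hN
        have hval : ¬ ((j : ℕ) + 1 ≤ N - 1) := by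
          simp only [hjdef]
          omega
        rw [hw N hN j, if_neg hval, zero_mul]
    have hI2 := I₂_le_ker 𝒩 (by omega) (hle hmem)
    rw [RingHom.mem_ker, he, map_mul, ψ_X, ψ_C, one_mul, map_sub, map_mul, map_one,
      ψ0_T, ψ0_C, ← T_add, sub_eq_zero] at hI2
    exact T_ne_one (by omega) hI2
  · intro hle
    have hgen : (MvPolynomial.X j - 1 : WRing 𝒩) ∈ I₂ 𝒩 :=
      Ideal.subset_span (Or.inr ⟨j, rfl⟩)
    have := hle hgen
    simp only [Submodule.mem_iInf] at this
    have h2k := this 2 h2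
    rw [RingHom.mem_ker, map_sub, map_one, hw 2 h2 j] at h2k
    have hval : ¬ ((j : ℕ) + 1 ≤ 2 - 1) := by
      simp only [hjdef]
      omega
    rw [if_neg hval, zero_sub, neg_eq_zero] at h2k
    exact one_ne_zero h2k
end

section
/- For every integer 𝒩 ≥ 3: the element w_{𝒩−1}·(x·d^{𝒩−1} − 1) belongs to I₁ but not to I₂, and the element w_{𝒩−1} − 1 belongs to I₂ but not to I₁. -/
open LaurentPolynomial

set_option synthInstance.maxHeartbeats 1000000
set_option maxHeartbeats 1000000
set_option maxSynthPendingDepth 10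

noncomputable section AuxEval

/-- Monoid hom `Multiplicative ℤ →* ℤ[d^±]`, `n ↦ T (-n)`. -/
def gT : Multiplicative ℤ →* LaurentPolynomial ℤ where
  toFun n := T (-(Multiplicative.toAdd n))
  map_one' := by simp [T_zero]
  map_mul' a b := by
    show T (-(Multiplicative.toAdd a + Multiplicative.toAdd b)) = _
    rw [neg_add, T_add]

/-- Evaluation `ℤ[d^±][x^±] →+* ℤ[d^±]` sending `x = T 1 ↦ T (-1)` (i.e. `x ↦ d⁻¹`). -/
def evx : LaurentPolynomial (LaurentPolynomial ℤ) →+* LaurentPolynomial ℤ :=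
  AddMonoidAlgebra.liftNCRingHom (RingHom.id _) gT fun _ _ => Commute.all _ _

lemma evx_C (r : LaurentPolynomial ℤ) : evx (C r) = r := by
  rw [← single_eq_C, evx, AddMonoidAlgebra.liftNCRingHom_single]
  simp [gT, T_zero]

lemma evx_T (n : ℤ) : evx (T n) = T (-n) := by
  rw [show (T n : LaurentPolynomial (LaurentPolynomial ℤ)) = AddMonoidAlgebra.single n 1 from rfl,
    evx, AddMonoidAlgebra.liftNCRingHom_single]
  simp [gT]

lemma T_injective (a b : ℤ) (h : (T a : LaurentPolynomial ℤ) = T b) : a = b := by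
  have := congrArg LaurentPolynomial.degree h
  rw [LaurentPolynomial.degree_T, LaurentPolynomial.degree_T] at this
  exact_mod_cast this

end AuxEval

/-- For every integer `𝒩 ≥ 3`: the element `w_{𝒩−1}·(x·d^(𝒩−1) − 1)` belongs
to `I₁ = ⋂_{N=2}^{𝒩} ker φ_N` but not to `I₂`, and the element `w_{𝒩−1} − 1` belongs to
`I₂` but not to `I₁`. Here `φ_N : S → ℤ[d^{±1}]` is the unique ring homomorphism with
`φ_N(x) = d^(1−N)`, `φ_N(d) = d`, `φ_N(w_j) = 1` for `j ≤ N−1` and `φ_N(w_j) = 0` for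
`j ≥ N`, and `w_{𝒩−1}` is the last weight variable. -/
theorem separating_elements_of_weighted_and_nonweighted_ideals (𝒩 : ℕ) (h𝒩 : 3 ≤ 𝒩)
    (φ : ℕ → (WRing 𝒩 →+* LaurentPolynomial ℤ))
    (hx : ∀ N ∈ Finset.Icc 2 𝒩, φ N (MvPolynomial.C (T 1)) = T (1 - (N : ℤ)))
    (hd : ∀ N ∈ Finset.Icc 2 𝒩, φ N (MvPolynomial.C (C (T 1))) = T 1)
    (hw : ∀ N ∈ Finset.Icc 2 𝒩, ∀ j : Fin (𝒩 - 1),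
      φ N (MvPolynomial.X j) = if (j : ℕ) + 1 ≤ N - 1 then 1 else 0) :
    (MvPolynomial.X (⟨𝒩 - 2, by omega⟩ : Fin (𝒩 - 1)) *
        MvPolynomial.C ((T 1) * C (T ((𝒩 : ℤ) - 1)) - 1)
          ∈ (⨅ N ∈ Finset.Icc 2 𝒩, RingHom.ker (φ N)) ∧
      MvPolynomial.X (⟨𝒩 - 2, by omega⟩ : Fin (𝒩 - 1)) *
        MvPolynomial.C ((T 1) * C (T ((𝒩 : ℤ) - 1)) - 1) ∉ I₂ 𝒩) ∧
    ((MvPolynomial.X (⟨𝒩 - 2, by omega⟩ : Fin (𝒩 - 1)) - 1) ∈ I₂ 𝒩 ∧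
      (MvPolynomial.X (⟨𝒩 - 2, by omega⟩ : Fin (𝒩 - 1)) - 1)
        ∉ (⨅ N ∈ Finset.Icc 2 𝒩, RingHom.ker (φ N))) := by
  set v : Fin (𝒩 - 1) := ⟨𝒩 - 2, by omega⟩ with hv
  -- the evaluation homomorphism killing I₂
  let ψ : WRing 𝒩 →+* LaurentPolynomial ℤ := MvPolynomial.eval₂Hom evx (fun _ => 1)
  have hψC : ∀ r, ψ (MvPolynomial.C r) = evx r := fun r => MvPolynomial.eval₂Hom_C _ _ _
  have hψX : ∀ j, ψ (MvPolynomial.X j) = 1 := fun j => MvPolynomial.eval₂Hom_X' _ _ _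
  have hI₂ : I₂ 𝒩 ≤ RingHom.ker ψ := by
    rw [I₂, Ideal.span_le]
    rintro x (rfl | ⟨j, rfl⟩)
    · rw [SetLike.mem_coe, RingHom.mem_ker, hψC, map_prod]
      refine Finset.prod_eq_zero (i := 2) (by simp; omega) ?_
      rw [map_sub, map_mul, evx_T, evx_C, map_one, ← T_add]
      norm_num [T_zero]
    · rw [SetLike.mem_coe, RingHom.mem_ker, map_sub, map_one, hψX, sub_self]
  refine ⟨⟨?_, ?_⟩, ?_, ?_⟩
  · -- membership in I₁
    simp only [Submodule.mem_iInf]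
    intro N hN
    rw [RingHom.mem_ker, map_mul]
    have hN' := Finset.mem_Icc.mp hN
    rcases eq_or_ne N 𝒩 with rfl | hne
    · have hT : (T ((N : ℤ) - 1) : LaurentPolynomial ℤ) = (T 1) ^ (N - 1) := by
        rw [T_pow, mul_one]
        congr 1
        omega
      have key : (MvPolynomial.C ((T 1) * C (T ((N : ℤ) - 1)) - 1) : WRing N)
          = MvPolynomial.C (T 1) *
            (MvPolynomial.C (C ((T 1 : LaurentPolynomial ℤ))) : WRing N) ^ (N - 1) - 1 := by
        rw [hT, map_pow, map_sub, map_one, map_mul, map_pow]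
      rw [key, map_sub, map_one, map_mul, map_pow, hx N hN, hd N hN, T_pow, mul_one,
        ← T_add]
      have : (1 - (N : ℤ)) + ((N - 1 : ℕ) : ℤ) = 0 := by omega
      rw [this, T_zero, sub_self, mul_zero]
    · rw [hw N hN v, if_neg (by simp only [hv]; omega), zero_mul]
  · -- non-membership in I₂
    intro hmem
    have h0 := hI₂ hmem
    rw [RingHom.mem_ker, map_mul, hψX, hψC, one_mul, map_sub, map_mul, evx_T, evx_C,
      map_one, ← T_add, sub_eq_zero] at h0
    have := T_injective _ 0 (h0.trans T_zero.symm)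
    omega
  · -- membership in I₂
    refine Ideal.subset_span ?_
    exact Or.inr ⟨v, rfl⟩
  · -- non-membership in I₁
    intro hmem
    simp only [Submodule.mem_iInf] at hmem
    have h1 := hmem (𝒩 - 1) (Finset.mem_Icc.mpr ⟨by omega, by omega⟩)
    rw [RingHom.mem_ker, map_sub, map_one, hw (𝒩 - 1)
      (Finset.mem_Icc.mpr ⟨by omega, by omega⟩) v,
      if_neg (by simp only [hv]; omega), zero_sub, neg_eq_zero] at h1
    exact one_ne_zero h1
end

section
/- Let M be an integer with 2 ≤ M ≤ 𝒩, let ζ ∈ ℂ be a primitive 2M-th root of unity, and let a_1,…,a_l ∈ ℂ be nonzero with a_c^{2M} ≠ 1. Let φ : L → ℂ be the unique ring homomorphism with φ(u_i) = a_i^{1−M}, φ(x_i) = a_i, φ(d) = ζ^{−1}, φ(y) = (a_c − a_c^{−1})/(a_c^{M} − a_c^{−M}), φ(w^k_j) = 1 for j ≤ M−1 and φ(w^k_j) = 0 for j ≥ M. Then the ideal of L generated by ∏_{M'=2}^{𝒩}( u_i − x_i^{1−M'} ) (for 1 ≤ i ≤ l), ∏_{M'=2}^{𝒩}( y·(x_c^{M'}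 − x_c^{−M'}) − (x_c − x_c^{−1}) ), ∏_{M'=2}^{2𝒩}( d^{M'} − 1 ), w^k_1 − 1 (for 1 ≤ k ≤ l), and w^k_j·(w^k_j − 1) (for 1 ≤ k ≤ l, 2 ≤ j ≤ 𝒩−1) is contained in ker φ. (This is the inclusion of the non-semisimple refined ideal in the kernel of each root-of-unity ADO specialisation.) -/
set_option synthInstance.maxHeartbeats 1000000
set_option maxHeartbeats 1000000
set_option maxSynthPendingDepth 10

/-- The base ring `ℤ[u_1^{±1},…,u_l^{±1},x_1^{±1},…,x_l^{±1},d^{±1}]`, modelled as the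
group algebra of the free abelian group on the `u`'s (`Sum.inl`), the `x`'s
(`Sum.inr ∘ Sum.inl`) and `d` (`Sum.inr (Sum.inr ())`). -/
abbrev BRing (l : ℕ) : Type := AddMonoidAlgebra ℤ ((Fin l ⊕ Fin l ⊕ Unit) →₀ ℤ)

/-- The ring `L`: the polynomial ring over `BRing l` in the variables `y` (`Sum.inl`)
and `w^k_j` for `1 ≤ k ≤ l`, `1 ≤ j ≤ 𝒩−1` (`Sum.inr (k, j)`, where `j : Fin (𝒩−1)`
stands for the weight index `j+1`). -/
abbrev LRing (l 𝒩 : ℕ) : Type :=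
  MvPolynomial (Unit ⊕ Fin l × Fin (𝒩 - 1)) (BRing l)

/-- The monomial `u_i^n` in `L`. -/
noncomputable def uVar (l 𝒩 : ℕ) (i : Fin l) (n : ℤ) : LRing l 𝒩 :=
  MvPolynomial.C (AddMonoidAlgebra.single (Finsupp.single (Sum.inl i) n) 1)

/-- The monomial `x_i^n` in `L`. -/
noncomputable def xVar (l 𝒩 : ℕ) (i : Fin l) (n : ℤ) : LRing l 𝒩 :=
  MvPolynomial.C (AddMonoidAlgebra.single (Finsupp.single (Sum.inr (Sum.inl i)) n) 1)

/-- The monomial `d^n` in `L`. -/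
noncomputable def dVar (l 𝒩 : ℕ) (n : ℤ) : LRing l 𝒩 :=
  MvPolynomial.C (AddMonoidAlgebra.single (Finsupp.single (Sum.inr (Sum.inr ())) n) 1)

/-- The variable `y` in `L`. -/
noncomputable def yVar (l 𝒩 : ℕ) : LRing l 𝒩 := MvPolynomial.X (Sum.inl ())

/-- The variable `w^k_j` in `L` (`j : Fin (𝒩−1)` stands for the weight index `j+1`). -/
noncomputable def wVar (l 𝒩 : ℕ) (k : Fin l) (j : Fin (𝒩 - 1)) : LRing l 𝒩 :=
  MvPolynomial.X (Sum.inr (k, j))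

/-- The non-semisimple refined generators: `∏_{M'=2}^{𝒩}( u_i − x_i^{1−M'} )`,
`∏_{M'=2}^{𝒩}( y·(x_c^{M'} − x_c^{−M'}) − (x_c − x_c^{−1}) )`,
`∏_{M'=2}^{2𝒩}( d^{M'} − 1 )`, `w^k_1 − 1`, and `w^k_j·(w^k_j − 1)` for `2 ≤ j ≤ 𝒩−1`. -/
noncomputable def refADOSet (l 𝒩 : ℕ) (c : Fin l) : Set (LRing l 𝒩) :=
  (Set.range fun i : Fin l =>
    ∏ M' ∈ Finset.Icc 2 𝒩, (uVar l 𝒩 i 1 - xVar l 𝒩 i (1 - (M' : ℤ)))) ∪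
  {∏ M' ∈ Finset.Icc 2 𝒩,
      (yVar l 𝒩 * (xVar l 𝒩 c (M' : ℤ) - xVar l 𝒩 c (-(M' : ℤ))) -
        (xVar l 𝒩 c 1 - xVar l 𝒩 c (-1)))} ∪
  {∏ M' ∈ Finset.Icc 2 (2 * 𝒩), (dVar l 𝒩 (M' : ℤ) - 1)} ∪
  {p | ∃ k : Fin l, ∃ j : Fin (𝒩 - 1), (j : ℕ) = 0 ∧ p = wVar l 𝒩 k j - 1} ∪
  {p | ∃ k : Fin l, ∃ j : Fin (𝒩 - 1), 1 ≤ (j : ℕ) ∧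
    p = wVar l 𝒩 k j * (wVar l 𝒩 k j - 1)}

/-!
Each generator of the refined ideal is sent to zero by `φ`. The products over `M' ∈ [2, 𝒩]`
(resp. `[2, 2𝒩]`) contain the factor `M' = M` (resp. `M' = 2M`), which `φ` kills by the choice
of `φ(u_i)`, by `ζ^{2M} = 1`, and, for the `y`-generator, because `a_c^{2M} ≠ 1` makes
`a_c^M − a_c^{−M}` invertible. The `w`-generators vanish because `φ(w^k_j) ∈ {0, 1}` with
`φ(w^k_1) = 1` as `M ≥ 2`.
-/

open MvPolynomial

theorem AddMonoidAlgebra.map_single_zsmul {k G K F : Type*} [Semiring k] [AddGroup G]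
    [DivisionMonoid K] [FunLike F (AddMonoidAlgebra k G) K]
    [MonoidHomClass F (AddMonoidAlgebra k G) K]
    (f : F) (g : G) (n : ℤ) :
    f (single (n • g) 1) = f (single g 1) ^ n := by
  simpa [of_apply] using
    map_zpow ((f : AddMonoidAlgebra k G →* K).comp (of k G)) (Multiplicative.ofAdd g) n

section Specialisation

variable {l 𝒩 : ℕ} {K : Type*} [DivisionRing K] (f : LRing l 𝒩 →+* K)

theorem map_xVar_eq_zpow (i : Fin l) (n : ℤ) : f (xVar l 𝒩 i n) = f (xVar l 𝒩 i 1) ^ n := by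
  simpa [xVar] using AddMonoidAlgebra.map_single_zsmul (f.comp C) (Finsupp.single _ 1) n

theorem map_dVar_eq_zpow (n : ℤ) : f (dVar l 𝒩 n) = f (dVar l 𝒩 1) ^ n := by
  simpa [dVar] using AddMonoidAlgebra.map_single_zsmul (f.comp C) (Finsupp.single _ 1) n

end Specialisation

theorem zpow_sub_zpow_neg_ne_zero {K : Type*} [DivisionRing K] {a : K} (ha : a ≠ 0) {M : ℕ}
    (hM : a ^ (2 * M) ≠ 1) : a ^ (M : ℤ) - a ^ (-(M : ℤ)) ≠ 0 := by
  refine sub_ne_zero.mpr fun h => hM ?_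
  calc a ^ (2 * M) = a ^ (M : ℤ) * a ^ (M : ℤ) := by rw [← zpow_add₀ ha]; norm_cast; ring_nf
    _ = a ^ (M : ℤ) * a ^ (-(M : ℤ)) := by rw [← h]
    _ = 1 := by rw [← zpow_add₀ ha, add_neg_cancel, zpow_zero]

theorem refined_nonsemisimple_ideal_le_ker_ADO_specialisation_general
    (l 𝒩 : ℕ) (c : Fin l)
    (M : ℕ) (hM2 : 2 ≤ M) (hM𝒩 : M ≤ 𝒩)
    (ζ : ℂ) (hζ : IsPrimitiveRoot ζ (2 * M))
    (a : Fin l → ℂ) (ha : ∀ i, a i ≠ 0) (hac : a c ^ (2 * M) ≠ 1)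
    (φ : LRing l 𝒩 →+* ℂ)
    (hu : ∀ i, φ (uVar l 𝒩 i 1) = a i ^ (1 - (M : ℤ)))
    (hx : ∀ i, φ (xVar l 𝒩 i 1) = a i)
    (hd : φ (dVar l 𝒩 1) = ζ⁻¹)
    (hy : φ (yVar l 𝒩) = (a c - (a c)⁻¹) / (a c ^ (M : ℤ) - a c ^ (-(M : ℤ))))
    (hw : ∀ k j, φ (wVar l 𝒩 k j) = if (j : ℕ) + 1 ≤ M - 1 then 1 else 0) :
    Ideal.span (refADOSet l 𝒩 c) ≤ RingHom.ker φ := by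
  have hφx (i : Fin l) (n : ℤ) : φ (xVar l 𝒩 i n) = a i ^ n := by rw [map_xVar_eq_zpow, hx]
  have hM : M ∈ Finset.Icc 2 𝒩 := Finset.mem_Icc.mpr ⟨hM2, hM𝒩⟩
  rw [Ideal.span_le]
  rintro p ((((⟨i, rfl⟩ | rfl) | rfl) | ⟨k, j, hj, rfl⟩) | ⟨k, j, -, rfl⟩) <;>
    rw [SetLike.mem_coe, RingHom.mem_ker]
  · refine (map_prod φ _ _).trans (Finset.prod_eq_zero hM ?_)
    rw [map_sub, hu, hφx, sub_self]
  · refine (map_prod φ _ _).trans (Finset.prod_eq_zero hM ?_)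
    simp only [map_sub, map_mul, hy, hφx, zpow_one, zpow_neg_one]
    rw [div_mul_cancel₀ _ (zpow_sub_zpow_neg_ne_zero (ha c) hac), sub_self]
  · have h2M : 2 * M ∈ Finset.Icc 2 (2 * 𝒩) := Finset.mem_Icc.mpr ⟨by omega, by omega⟩
    refine (map_prod φ _ _).trans (Finset.prod_eq_zero h2M ?_)
    rw [map_sub, map_one, map_dVar_eq_zpow, hd, inv_zpow', zpow_neg, zpow_natCast,
      hζ.pow_eq_one, inv_one, sub_self]
  · rw [map_sub, map_one, hw, if_pos (by omega), sub_self]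
  · rw [map_mul, map_sub, map_one, hw]
    split_ifs <;> simp

/-- Let `2 ≤ M ≤ 𝒩`, let `ζ ∈ ℂ` be a primitive `2M`-th root of unity, and
let `a_1,…,a_l ∈ ℂ` be nonzero with `a_c^{2M} ≠ 1`.  Let `φ : L → ℂ` be the unique ring
homomorphism with `φ(u_i) = a_i^{1−M}`, `φ(x_i) = a_i`, `φ(d) = ζ⁻¹`,
`φ(y) = (a_c − a_c^{−1})/(a_c^{M} − a_c^{−M})`, `φ(w^k_j) = 1` for `j ≤ M−1` and
`φ(w^k_j) = 0` for `j ≥ M`.  Then the non-semisimple refined ideal is contained in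
`ker φ`. -/
theorem refined_nonsemisimple_ideal_le_ker_ADO_specialisation
    (l 𝒩 : ℕ) (hl : 1 ≤ l) (h𝒩 : 2 ≤ 𝒩) (c : Fin l)
    (M : ℕ) (hM2 : 2 ≤ M) (hM𝒩 : M ≤ 𝒩)
    (ζ : ℂ) (hζ : IsPrimitiveRoot ζ (2 * M))
    (a : Fin l → ℂ) (ha : ∀ i, a i ≠ 0) (hac : a c ^ (2 * M) ≠ 1)
    (φ : LRing l 𝒩 →+* ℂ)
    (hu : ∀ i, φ (uVar l 𝒩 i 1) = a i ^ (1 - (M : ℤ)))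
    (hx : ∀ i, φ (xVar l 𝒩 i 1) = a i)
    (hd : φ (dVar l 𝒩 1) = ζ⁻¹)
    (hy : φ (yVar l 𝒩) = (a c - (a c)⁻¹) / (a c ^ (M : ℤ) - a c ^ (-(M : ℤ))))
    (hw : ∀ k j, φ (wVar l 𝒩 k j) = if (j : ℕ) + 1 ≤ M - 1 then 1 else 0) :
    Ideal.span (refADOSet l 𝒩 c) ≤ RingHom.ker φ :=
  refined_nonsemisimple_ideal_le_ker_ADO_specialisation_general l 𝒩 c M hM2 hM𝒩 ζ hζ a ha hac φ hu
    hx hd hy hw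
end
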